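/- arXiv:2011.01052 — 7 statements merged into one kernel-verified Lean document; each statement's English description precedes it below -/
import Mathlib

section
/- For fixed n ≥ 2, the quantity p(n,m) = r^(n-1) + ((m-1)/(m-r))·((r/m)^(n-1) − 1), with r = (m-1)/m^n + 1, tends to 0 as m → ∞. -/
open Filter

/-- `r` parameter of Wiese–Heinrich Theorem 1. -/
noncomputable def rWH (n m : ℕ) : ℝ := ((m : ℝ) - 1) / (m : ℝ) ^ n + 1

/-- Frequency of n-player, m-strategy games with a unique pure Nash equilibrium. -/
noncomputable def pWH (n m : ℕ) : ℝ :=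
  rWH n m ^ (n - 1) +
    (((m : ℝ) - 1) / ((m : ℝ) - rWH n m)) * ((rWH n m / (m : ℝ)) ^ (n - 1) - 1)

theorem pWH_tendsto_zero_in_m (n : ℕ) (hn : 2 ≤ n) :
    Filter.Tendsto (fun m : ℕ => pWH n m) Filter.atTop (nhds 0) := by
  have hinv : Tendsto (fun m : ℕ => ((m : ℝ))⁻¹) atTop (nhds 0) :=
    tendsto_inv_atTop_zero.comp tendsto_natCast_atTop_atTop
  have hninv : Tendsto (fun m : ℕ => (((m : ℝ)) ^ n)⁻¹) atTop (nhds 0) :=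
    tendsto_inv_atTop_zero.comp
      ((tendsto_pow_atTop (by omega : n ≠ 0)).comp tendsto_natCast_atTop_atTop)
  -- (m-1)/m^n → 0 by squeeze
  have h1 : Tendsto (fun m : ℕ => ((m : ℝ) - 1) / (m : ℝ) ^ n) atTop (nhds 0) := by
    apply squeeze_zero' (g := fun m : ℕ => ((m : ℝ))⁻¹)
    · filter_upwards [eventually_ge_atTop 1] with m hm
      have hm' : (1 : ℝ) ≤ (m : ℝ) := by exact_mod_cast hm
      exact div_nonneg (by linarith) (by positivity)
    · filter_upwards [eventually_ge_atTop 1] with m hm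
      have hm' : (1 : ℝ) ≤ (m : ℝ) := by exact_mod_cast hm
      have hpow : (0 : ℝ) < (m : ℝ) ^ n := by positivity
      have hsq : (m : ℝ) ^ 2 ≤ (m : ℝ) ^ n := pow_le_pow_right₀ hm' hn
      rw [div_le_iff₀ hpow, inv_eq_one_div, div_mul_eq_mul_div, le_div_iff₀ (by linarith)]
      nlinarith
    · exact hinv
  have hr : Tendsto (fun m : ℕ => rWH n m) atTop (nhds 1) := by
    have := h1.add (tendsto_const_nhds (x := (1 : ℝ)))
    simpa [rWH] using this
  have hA : Tendsto (fun m : ℕ => rWH n m ^ (n - 1)) atTop (nhds 1) := by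
    simpa using hr.pow (n - 1)
  have hrm : Tendsto (fun m : ℕ => rWH n m / (m : ℝ)) atTop (nhds 0) := by
    have := hr.mul hinv
    simpa [div_eq_mul_inv] using this
  have hB : Tendsto (fun m : ℕ => (rWH n m / (m : ℝ)) ^ (n - 1)) atTop (nhds 0) := by
    have := hrm.pow (n - 1)
    simpa [zero_pow (by omega : n - 1 ≠ 0)] using this
  have hC : Tendsto (fun m : ℕ => ((m : ℝ) - 1) / ((m : ℝ) - rWH n m)) atTop (nhds 1) := by
    have hg : Tendsto (fun m : ℕ => (1 - (((m : ℝ)) ^ n)⁻¹)⁻¹) atTop (nhds 1) := by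
      have := ((tendsto_const_nhds (x := (1 : ℝ))).sub hninv).inv₀ (by norm_num)
      simpa using this
    apply hg.congr'
    filter_upwards [eventually_ge_atTop 2] with m hm
    have hm' : (2 : ℝ) ≤ (m : ℝ) := by exact_mod_cast hm
    have hm0 : (m : ℝ) ≠ 0 := by linarith
    have hpow : (0 : ℝ) < (m : ℝ) ^ n := by positivity
    have hpow1 : (1 : ℝ) < (m : ℝ) ^ n := by
      calc (1:ℝ) < 2 := by norm_num
        _ ≤ (m:ℝ) := hm'
        _ = (m:ℝ)^1 := (pow_one _).symm
        _ ≤ (m:ℝ)^n := pow_le_pow_right₀ (by linarith) (by omega)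
    have hne : (1 : ℝ) - ((m : ℝ) ^ n)⁻¹ ≠ 0 := by
      have : ((m : ℝ) ^ n)⁻¹ < 1 := by
        rw [inv_lt_one_iff₀]; right; exact hpow1
      linarith
    have hsplit : (m : ℝ) - rWH n m = ((m:ℝ)-1) * (1 - ((m:ℝ)^n)⁻¹) := by
      unfold rWH; field_simp; ring
    rw [hsplit, eq_div_iff (mul_ne_zero (by linarith) hne)]
    field_simp
    rw [div_eq_iff (sub_ne_zero.mpr hpow1.ne')]
    ring
  have := hA.add (hC.mul (hB.sub (tendsto_const_nhds (x := (1 : ℝ)))))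
  have h0 : (1 : ℝ) + 1 * (0 - 1) = 0 := by norm_num
  rw [h0] at this
  exact this.congr fun m => by simp [pWH]
end

section
/- For fixed m ≥ 2, the quantity p(n,m) = r_n^(n-1) + ((m-1)/(m-r_n))·((r_n/m)^(n-1) − 1), with r_n = (m-1)/m^n + 1, tends to 0 as n → ∞. -/
open Filter Real

lemma aux_m_pos (m : ℕ) (hm : 2 ≤ m) : (0 : ℝ) < m := by
  exact_mod_cast Nat.lt_of_lt_of_le (by norm_num) hm

lemma rWH_ge_one (n m : ℕ) (hm : 2 ≤ m) : 1 ≤ rWH n m := by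
  have hm' := aux_m_pos m hm
  have h1 : (1 : ℝ) ≤ m := by exact_mod_cast Nat.one_le_of_lt hm
  have : 0 ≤ ((m : ℝ) - 1) / (m : ℝ) ^ n :=
    div_nonneg (by linarith) (by positivity)
  unfold rWH; linarith

/-- r_n → 1. -/
lemma rWH_tendsto_one (m : ℕ) (hm : 2 ≤ m) :
    Tendsto (fun n : ℕ => rWH n m) atTop (nhds 1) := by
  have hm' := aux_m_pos m hm
  have h1 : (1 : ℝ) < m := by exact_mod_cast hm.trans_lt' (by norm_num)
  have h := Tendsto.const_div_atTop (tendsto_pow_atTop_atTop_of_one_lt h1) ((m : ℝ) - 1)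
  have := h.add (tendsto_const_nhds (x := (1:ℝ)))
  simpa [rWH] using this

/-- (n-1)·(r_n - 1) → 0. -/
lemma exponent_tendsto_zero (m : ℕ) (hm : 2 ≤ m) :
    Tendsto (fun n : ℕ => ((n : ℝ) - 1) * (rWH n m - 1)) atTop (nhds 0) := by
  have hm' := aux_m_pos m hm
  have h1 : |(1 : ℝ) / m| < 1 := by
    rw [abs_of_pos (by positivity)]
    rw [div_lt_one hm']
    exact_mod_cast hm.trans_lt' (by norm_num)
  have hsum : Summable (fun n : ℕ => (n : ℝ) ^ 1 * ((1:ℝ)/m) ^ n) :=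
    summable_pow_mul_geometric_of_norm_lt_one 1 (by rwa [Real.norm_eq_abs])
  have h0 : Tendsto (fun n : ℕ => (n : ℝ) ^ 1 * ((1:ℝ)/m) ^ n) atTop (nhds 0) :=
    hsum.tendsto_atTop_zero
  have h2 : Tendsto (fun n : ℕ => ((1:ℝ)/m) ^ n) atTop (nhds 0) :=
    tendsto_pow_atTop_nhds_zero_of_lt_one (by positivity)
      (by rw [div_lt_one hm']; exact_mod_cast hm.trans_lt' (by norm_num))
  have key : Tendsto (fun n : ℕ => (((n : ℝ) ^ 1 * ((1:ℝ)/m) ^ n) - ((1:ℝ)/m) ^ n) * ((m:ℝ)-1))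
      atTop (nhds 0) := by
    simpa using (h0.sub h2).mul_const ((m:ℝ)-1)
  refine key.congr fun n => ?_
  have : rWH n m - 1 = ((m : ℝ) - 1) / (m : ℝ) ^ n := by unfold rWH; ring
  rw [this]
  field_simp
  have hx : ((1:ℝ)/m)^n * (m:ℝ)^n = 1 := by rw [← mul_pow, one_div_mul_cancel hm'.ne', one_pow]
  linear_combination ((n:ℝ)-1)*((m:ℝ)-1) * hx

/-- r_n^(n-1) → 1. -/
lemma rWH_pow_tendsto_one (m : ℕ) (hm : 2 ≤ m) :
    Tendsto (fun n : ℕ => rWH n m ^ (n - 1)) atTop (nhds 1) := by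
  have hub : Tendsto (fun n : ℕ => Real.exp (((n : ℝ) - 1) * (rWH n m - 1))) atTop (nhds 1) := by
    simpa [Function.comp_def] using (Real.continuous_exp.tendsto 0).comp (exponent_tendsto_zero m hm)
  refine tendsto_of_tendsto_of_tendsto_of_le_of_le' (g := fun _ => (1:ℝ))
    tendsto_const_nhds hub
    (Filter.Eventually.of_forall fun n => one_le_pow₀ (rWH_ge_one n m hm)) ?_
  filter_upwards [Filter.eventually_ge_atTop 1] with n hn
  have h1 := rWH_ge_one n m hm
  have hle : rWH n m ≤ Real.exp (rWH n m - 1) := by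
    have := Real.add_one_le_exp (rWH n m - 1)
    linarith
  calc rWH n m ^ (n - 1) ≤ Real.exp (rWH n m - 1) ^ (n - 1) :=
        pow_le_pow_left₀ (by linarith) hle _
    _ = Real.exp (((n:ℕ) - 1 : ℕ) * (rWH n m - 1)) := by
        rw [← Real.exp_nat_mul]
    _ ≤ Real.exp (((n : ℝ) - 1) * (rWH n m - 1)) := by
        apply Real.exp_le_exp.2
        have h2 : (0:ℝ) ≤ rWH n m - 1 := by linarith
        have h3 : ((n - 1 : ℕ) : ℝ) ≤ (n : ℝ) - 1 := by
          rw [Nat.cast_sub hn]; simp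
        exact mul_le_mul_of_nonneg_right h3 h2
  
theorem pWH_tendsto_zero_in_n (m : ℕ) (hm : 2 ≤ m) :
    Filter.Tendsto (fun n : ℕ => pWH n m) Filter.atTop (nhds 0) := by
  have hm' := aux_m_pos m hm
  have hmm : (1:ℝ) < m := by exact_mod_cast hm.trans_lt' (by norm_num)
  have hA := rWH_pow_tendsto_one m hm
  -- B → 1
  have hr1 := rWH_tendsto_one m hm
  have hB : Tendsto (fun n : ℕ => ((m:ℝ)-1) / ((m:ℝ) - rWH n m)) atTop (nhds 1) := by
    have : Tendsto (fun n : ℕ => ((m:ℝ)-1) / ((m:ℝ) - rWH n m)) atTop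
        (nhds (((m:ℝ)-1) / ((m:ℝ) - 1))) :=
      tendsto_const_nhds.div (tendsto_const_nhds.sub hr1) (by linarith)
    simpa [div_self (show (m:ℝ)-1 ≠ 0 by linarith)] using this
  -- (r/m)^(n-1) → 0
  have hinv : Tendsto (fun n : ℕ => ((1:ℝ)/m) ^ (n-1)) atTop (nhds 0) := by
    have h2 : Tendsto (fun k : ℕ => ((1:ℝ)/m) ^ k) atTop (nhds 0) :=
      tendsto_pow_atTop_nhds_zero_of_lt_one (le_of_lt (by positivity : (0:ℝ) < 1/m))
        (by rw [div_lt_one hm']; exact hmm)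
    exact h2.comp (tendsto_sub_atTop_nat 1)
  have hC : Tendsto (fun n : ℕ => (rWH n m / (m:ℝ)) ^ (n-1)) atTop (nhds 0) := by
    have := hA.mul hinv
    simpa [div_pow, mul_one_div, div_eq_mul_inv, mul_pow, one_pow] using this
  have : Tendsto (fun n : ℕ => pWH n m) atTop (nhds (1 + 1 * (0 - 1))) := by
    exact hA.add (hB.mul (hC.sub tendsto_const_nhds))
  simpa using this
end

section
/- For all integers n ≥ 2 and m ≥ 2, the quantity p(n,m) = r^(n-1) + ((m-1)/(m-r))·((r/m)^(n-1) − 1), with r = (m-1)/m^n + 1, satisfies 0 < p(n,m) ≤ 3/4, with equality exactly when n = m = 2. -/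
lemma keyNat : ∀ k j : ℕ, ¬(k = 0 ∧ j = 0) →
    7*(k+1)*(j+1) + 4*(j+2) ≤ 3*(j+2)^(k+2) := by
  intro k
  induction k with
  | zero =>
    intro j h
    have hj : 1 ≤ j := by omega
    have : (j+2)^(0+2) = j*j+4*j+4 := by ring
    nlinarith [Nat.mul_le_mul hj hj]
  | succ k ih =>
    intro j _
    by_cases hk : k = 0 ∧ j = 0
    · obtain ⟨hk0, hj0⟩ := hk; subst hk0; subst hj0; norm_num
    · have H := ih j hk
      have hpow : 3*(j+2)^(k+2+1) = (j+2) * (3*(j+2)^(k+2)) := by ring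
      have : 2 * (3*(j+2)^(k+2)) ≤ (j+2) * (3*(j+2)^(k+2)) := by
        apply Nat.mul_le_mul_right; omega
      nlinarith [H]

lemma pWH_eq (k m : ℕ) (hk : 1 ≤ k) (hm : 2 ≤ m) :
    pWH (k+1) m = ((rWH (k+1) m)^k * ((m:ℝ)^(k+1) + (m:ℝ) - 1) - (m:ℝ)^(k+1))
      / ((m:ℝ)^(k+1) - 1) := by
  have hA : (2:ℝ) ≤ (m:ℝ) := by exact_mod_cast hm
  have hA0 : (m:ℝ) ≠ 0 := by linarith
  have hM2 : (2:ℝ) ≤ (m:ℝ)^(k+1) := by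
    calc (2:ℝ) ≤ (m:ℝ) := hA
    _ = (m:ℝ)^1 := (pow_one _).symm
    _ ≤ (m:ℝ)^(k+1) := pow_le_pow_right₀ (by linarith) (by omega)
  have hM0 : (m:ℝ)^(k+1) ≠ 0 := by positivity
  have hM1 : (m:ℝ)^(k+1) - 1 ≠ 0 := by linarith
  have hAr : (m:ℝ) - rWH (k+1) m
      = ((m:ℝ)-1)*((m:ℝ)^(k+1)-1)/(m:ℝ)^(k+1) := by
    unfold rWH; field_simp; ring
  have hArne : (m:ℝ) - rWH (k+1) m ≠ 0 := by
    rw [hAr]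
    have : (0:ℝ) < ((m:ℝ)-1)*((m:ℝ)^(k+1)-1)/(m:ℝ)^(k+1) := by
      apply div_pos (by nlinarith) (by positivity)
    linarith
  unfold pWH
  simp only [Nat.add_sub_cancel]
  rw [div_pow, hAr]
  have hAk : (m:ℝ)^k ≠ 0 := by positivity
  have hA1 : (m:ℝ) - 1 ≠ 0 := by linarith
  rw [pow_succ] at *
  field_simp
  rw [eq_div_iff (by rw [mul_comm]; exact hM1), add_mul, div_mul_cancel₀ _ (by rw [mul_comm]; exact hM1)]; ring

lemma rWH_one_le (k m : ℕ) (hm : 2 ≤ m) : 1 ≤ rWH (k+1) m := by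
  have hA : (2:ℝ) ≤ (m:ℝ) := by exact_mod_cast hm
  have : (0:ℝ) ≤ ((m:ℝ)-1)/(m:ℝ)^(k+1) := div_nonneg (by linarith) (by positivity)
  unfold rWH; linarith

lemma pWH_pos (k m : ℕ) (hk : 1 ≤ k) (hm : 2 ≤ m) : 0 < pWH (k+1) m := by
  have hA : (2:ℝ) ≤ (m:ℝ) := by exact_mod_cast hm
  have hM2 : (2:ℝ) ≤ (m:ℝ)^(k+1) := by
    calc (2:ℝ) ≤ (m:ℝ) := hA
    _ = (m:ℝ)^1 := (pow_one _).symm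
    _ ≤ (m:ℝ)^(k+1) := pow_le_pow_right₀ (by linarith) (by omega)
  have hs1 : 1 ≤ (rWH (k+1) m)^k := one_le_pow₀ (rWH_one_le k m hm)
  rw [pWH_eq k m hk hm]
  apply div_pos _ (by linarith)
  nlinarith

lemma pWH_lt (k m : ℕ) (hk : 1 ≤ k) (hm : 2 ≤ m) (hne : ¬(k = 1 ∧ m = 2)) :
    pWH (k+1) m < 3/4 := by
  have hA : (2:ℝ) ≤ (m:ℝ) := by exact_mod_cast hm
  set M : ℝ := (m:ℝ)^(k+1) with hMdef
  have hM2 : (2:ℝ) ≤ M := by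
    calc (2:ℝ) ≤ (m:ℝ) := hA
    _ = (m:ℝ)^1 := (pow_one _).symm
    _ ≤ (m:ℝ)^(k+1) := pow_le_pow_right₀ (by linarith) (by omega)
  have hM0 : (0:ℝ) < M := by linarith
  set q : ℝ := ((m:ℝ)-1)/M with hqdef
  have hq0 : 0 < q := by apply div_pos (by linarith) hM0
  have hq1 : q < 1 := by
    rw [hqdef, div_lt_one hM0]
    have : (m:ℝ) ≤ M := by
      calc (m:ℝ) = (m:ℝ)^1 := (pow_one _).symm
      _ ≤ (m:ℝ)^(k+1) := pow_le_pow_right₀ (by linarith) (by omega)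
    linarith
  have hr : rWH (k+1) m = 1 + q := by unfold rWH; rw [hqdef]; ring
  -- Bernoulli: (1-q)^k ≥ 1 - k*q
  have hBer : 1 - (k:ℝ)*q ≤ (1-q)^k := by
    have := one_add_mul_le_pow (a := -q) (by linarith) k
    rw [show (1:ℝ) + -q = 1 - q by ring] at this; linarith
  have hs0 : (0:ℝ) < (1+q)^k := by positivity
  have hprod : (1+q)^k * (1 - (k:ℝ)*q) < 1 := by
    calc (1+q)^k * (1 - (k:ℝ)*q) ≤ (1+q)^k * (1-q)^k := by
          apply mul_le_mul_of_nonneg_left hBer (le_of_lt hs0)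
    _ = ((1+q)*(1-q))^k := (mul_pow _ _ _).symm
    _ = (1 - q^2)^k := by ring_nf
    _ < 1 := by
        apply pow_lt_one₀ (by nlinarith) (by nlinarith) (by omega)
  -- key nat inequality
  have hkey : 7*(k:ℝ)*((m:ℝ)-1) + 4*(m:ℝ) ≤ 3*M := by
    obtain ⟨k', rfl⟩ : ∃ k', k = k'+1 := ⟨k-1, by omega⟩
    obtain ⟨j, rfl⟩ : ∃ j, m = j+2 := ⟨m-2, by omega⟩
    have h := keyNat k' j (by omega)
    have := (Nat.cast_le (α := ℝ)).2 h
    push_cast at this ⊢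
    rw [hMdef]
    push_cast
    linarith
  -- unfold representation
  rw [pWH_eq k m hk hm, hr, div_lt_iff₀ (by linarith : (0:ℝ) < M - 1)]
  -- from hprod : s*(1-kq) < 1 get s*(M - k(m-1)) < M
  set s : ℝ := (1+q)^k with hsdef
  have hs1 : (1:ℝ) ≤ s := one_le_pow₀ (by linarith)
  have hprod' : s * (M - (k:ℝ)*((m:ℝ)-1)) < M := by
    have h1 : s * (M - (k:ℝ)*((m:ℝ)-1)) = (s * (1 - (k:ℝ)*q)) * M := by
      rw [hqdef]; field_simp
    rw [h1]
    calc (s * (1 - (k:ℝ)*q)) * M < 1 * M := by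
          apply mul_lt_mul_of_pos_right hprod hM0
    _ = M := one_mul M
  nlinarith [mul_le_mul_of_nonneg_left hkey (by linarith : (0:ℝ) ≤ s)]

theorem pWH_pos_le_three_quarters (n m : ℕ) (hn : 2 ≤ n) (hm : 2 ≤ m) :
    0 < pWH n m ∧ pWH n m ≤ 3 / 4 ∧ (pWH n m = 3 / 4 ↔ n = 2 ∧ m = 2) := by
  obtain ⟨k, rfl⟩ : ∃ k, n = k+1 := ⟨n-1, by omega⟩
  have hk : 1 ≤ k := by omega
  have h22 : pWH 2 2 = 3/4 := by
    unfold pWH rWH; norm_num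
  refine ⟨pWH_pos k m hk hm, ?_, ?_⟩
  · by_cases h : k = 1 ∧ m = 2
    · obtain ⟨h1, h2⟩ := h; subst h1; subst h2; rw [h22]
    · exact le_of_lt (pWH_lt k m hk hm h)
  · constructor
    · intro hp
      by_contra hc
      have hne : ¬(k = 1 ∧ m = 2) := by omega
      have := pWH_lt k m hk hm hne
      linarith
    · rintro ⟨h1, h2⟩
      have : k = 1 := by omega
      subst this; subst h2; exact h22
end

section
/- For integers m ≥ 2 and 1 ≤ k ≤ m, define q(m,k) = ((2m−k)/(m^(2k+2)·(k−1)!))·(m!/(m−k)!)^2. Then for 1 ≤ k1 < k2 ≤ m, q(m,k1) > q(m,k2). -/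
set_option maxHeartbeats 800000

/-- Frequency of 2-player, m-strategy convergent games with exactly k PSNEs. -/
noncomputable def qWH (m k : ℕ) : ℝ :=
  ((2 * (m : ℝ) - (k : ℝ)) / ((m : ℝ) ^ (2 * k + 2) * (Nat.factorial (k - 1) : ℝ))) *
    ((Nat.factorial m : ℝ) / (Nat.factorial (m - k) : ℝ)) ^ 2

lemma qWH_step (m j : ℕ) (hm : 2 ≤ m) (hk : j + 2 ≤ m) :
    qWH m (j+1+1) < qWH m (j+1) := by
  obtain ⟨t, ht⟩ : ∃ t, m - (j+2) = t := ⟨_, rfl⟩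
  have h1 : m - (j+1+1) = t := by omega
  have h2 : m - (j+1) = t + 1 := by omega
  have hmeq : m = t + j + 2 := by omega
  unfold qWH
  rw [h1, h2]
  simp only [Nat.add_sub_cancel, Nat.factorial_succ]
  have e1 : 2*(j+1+1)+2 = (2*(j+1)+2) + 2 := by ring
  rw [e1, pow_add]
  push_cast
  have hF : (0:ℝ) < (Nat.factorial j : ℝ) := by exact_mod_cast j.factorial_pos
  have hG : (0:ℝ) < (Nat.factorial t : ℝ) := by exact_mod_cast t.factorial_pos
  have hMf : (0:ℝ) < (Nat.factorial m : ℝ) := by exact_mod_cast m.factorial_pos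
  have hm' : ((m:ℝ)) = (t:ℝ) + (j:ℝ) + 2 := by exact_mod_cast congrArg (Nat.cast : ℕ → ℝ) hmeq
  have hA : (0:ℝ) < ((m:ℝ) ^ (2*(j+1)+2)) := by positivity
  have htn : (0:ℝ) ≤ (t:ℝ) := by positivity
  have hjn : (0:ℝ) ≤ (j:ℝ) := by positivity
  generalize (Nat.factorial j : ℝ) = F at hF ⊢
  generalize (Nat.factorial t : ℝ) = G at hG ⊢
  generalize (Nat.factorial m : ℝ) = M at hMf ⊢
  generalize ((m:ℝ) ^ (2*(j+1)+2)) = A at hA ⊢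
  rw [hm']
  rw [div_pow, div_pow]
  rw [div_mul_div_comm, div_mul_div_comm]
  rw [div_lt_div_iff₀ (by positivity) (by positivity)]
  have hP : (0:ℝ) < M^2*A*F*G^2 := by positivity
  have hxy : (2*((t:ℝ)+j+2)-((j:ℝ)+1+1))*(((t:ℝ)+1)^2) <
      (2*((t:ℝ)+j+2)-((j:ℝ)+1))*((((t:ℝ)+j+2)^2*((j:ℝ)+1))) := by
    have s1 : (2*((t:ℝ)+j+2)-((j:ℝ)+1+1))*(((t:ℝ)+1)^2) <
        (2*((t:ℝ)+j+2)-((j:ℝ)+1))*(((t:ℝ)+1)^2) :=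
      mul_lt_mul_of_pos_right (by linarith) (by positivity)
    have s2 : (2*((t:ℝ)+j+2)-((j:ℝ)+1))*(((t:ℝ)+1)^2) ≤
        (2*((t:ℝ)+j+2)-((j:ℝ)+1))*(((t:ℝ)+j+2)^2) :=
      mul_le_mul_of_nonneg_left (by nlinarith) (by linarith)
    have s3 : (2*((t:ℝ)+j+2)-((j:ℝ)+1))*(((t:ℝ)+j+2)^2) ≤
        (2*((t:ℝ)+j+2)-((j:ℝ)+1))*((((t:ℝ)+j+2)^2*((j:ℝ)+1))) :=
      mul_le_mul_of_nonneg_left (le_mul_of_one_le_right (by positivity) (by linarith)) (by linarith)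
    exact s1.trans_le (s2.trans s3)
  nlinarith [mul_lt_mul_of_pos_left hxy hP]

theorem qWH_strictAnti (m k₁ k₂ : ℕ) (hm : 2 ≤ m) (hk₁ : 1 ≤ k₁) (hlt : k₁ < k₂)
    (hk₂ : k₂ ≤ m) : qWH m k₂ < qWH m k₁ := by
  induction k₂ with
  | zero => omega
  | succ n ih =>
    have hn1 : 1 ≤ n := by omega
    obtain ⟨j, rfl⟩ : ∃ j, n = j + 1 := ⟨n - 1, by omega⟩
    rcases Nat.lt_or_ge k₁ (j+1) with h | h
    · exact lt_trans (qWH_step m j hm (by omega)) (ih h (by omega))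
    · have : k₁ = j + 1 := by omega
      subst this
      exact qWH_step m j hm (by omega)
end

section
/- For each m ≥ 2, the sum over k from 1 to m of q(m,k) = ((2m−k)/(m^(2k+2)·(k−1)!))·(m!/(m−k)!)^2 is at most 1. -/
lemma fact_le_pow_mul (m : ℕ) : ∀ k, k ≤ m → Nat.factorial m ≤ m ^ k * Nat.factorial (m - k) := by
  intro k
  induction k with
  | zero => simp
  | succ k ih =>
    intro hk
    have hk' : k ≤ m := Nat.le_of_succ_le hk
    have hpos : 0 < m - k := Nat.sub_pos_of_lt hk
    calc Nat.factorial m ≤ m ^ k * Nat.factorial (m - k) := ih hk'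
    _ = m ^ k * ((m - k) * Nat.factorial (m - k - 1)) := by
        rw [Nat.mul_factorial_pred hpos.ne']
    _ ≤ m ^ k * (m * Nat.factorial (m - (k + 1))) := by
        rw [← Nat.sub_sub]
        gcongr
        exact Nat.sub_le m k
    _ = m ^ (k + 1) * Nat.factorial (m - (k + 1)) := by ring

lemma two_pow_le_two_mul_fact : ∀ j : ℕ, 2 ^ j ≤ 2 * Nat.factorial j := by
  intro j
  induction j with
  | zero => norm_num
  | succ j ih =>
    rcases Nat.eq_zero_or_pos j with h | h
    · subst h; norm_num [Nat.factorial]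
    · rw [pow_succ, Nat.factorial_succ]
      nlinarith [Nat.factorial_pos j]

lemma qWH_le (m k : ℕ) (hm : 2 ≤ m) (hk1 : 1 ≤ k) (hkm : k ≤ m) :
    qWH m k ≤ 2 / (m * Nat.factorial (k - 1)) := by
  have hm0 : (0:ℝ) < m := by positivity
  have hF : (0:ℝ) < Nat.factorial (k - 1) := by positivity
  have hfk : (0:ℝ) < Nat.factorial (m - k) := by positivity
  have hD : (0:ℝ) < (m:ℝ) ^ (2 * k + 2) * Nat.factorial (k - 1) := by positivity
  have hratio : (Nat.factorial m : ℝ) / (Nat.factorial (m - k) : ℝ) ≤ (m:ℝ) ^ k := by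
    rw [div_le_iff₀ hfk]
    exact_mod_cast fact_le_pow_mul m k hkm
  have hratio0 : (0:ℝ) ≤ (Nat.factorial m : ℝ) / (Nat.factorial (m - k) : ℝ) := by positivity
  have hkr : (k:ℝ) ≤ m := by exact_mod_cast hkm
  have h1 : qWH m k ≤ (2 * (m:ℝ)) / ((m:ℝ) ^ (2 * k + 2) * Nat.factorial (k - 1)) * ((m:ℝ) ^ k) ^ 2 := by
    unfold qWH
    apply mul_le_mul
    · apply div_le_div_of_nonneg_right ?_ hD.le
      linarith
    · exact pow_le_pow_left₀ hratio0 hratio 2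
    · positivity
    · positivity
  calc qWH m k ≤ (2 * (m:ℝ)) / ((m:ℝ) ^ (2 * k + 2) * Nat.factorial (k - 1)) * ((m:ℝ) ^ k) ^ 2 := h1
  _ = 2 / (m * Nat.factorial (k - 1)) := by
      rw [← pow_mul]
      rw [div_mul_eq_mul_div, div_eq_div_iff hD.ne' (by positivity)]
      rw [pow_add]
      ring

theorem qWH_sum_le_one (m : ℕ) (hm : 2 ≤ m) :
    ∑ k ∈ Finset.Icc 1 m, qWH m k ≤ 1 := by
  rcases le_or_gt 8 m with h8 | h8
  · have hm0 : (0:ℝ) < m := by positivity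
    have step1 : ∑ k ∈ Finset.Icc 1 m, qWH m k ≤ ∑ k ∈ Finset.Icc 1 m, 2 / ((m:ℝ) * Nat.factorial (k - 1)) := by
      apply Finset.sum_le_sum
      intro k hk
      rw [Finset.mem_Icc] at hk
      exact qWH_le m k hm hk.1 hk.2
    have step2 : ∑ k ∈ Finset.Icc 1 m, 2 / ((m:ℝ) * Nat.factorial (k - 1))
        = (2 / m) * ∑ j ∈ Finset.range m, (1:ℝ) / Nat.factorial j := by
      rw [← Finset.Ico_add_one_right_eq_Icc, Finset.sum_Ico_eq_sum_range, Finset.mul_sum]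
      simp only [Nat.add_sub_cancel]
      congr 1
      funext j
      rw [show 1 + j - 1 = j by omega]
      field_simp
    have step3 : ∑ j ∈ Finset.range m, (1:ℝ) / Nat.factorial j ≤ 4 := by
      calc ∑ j ∈ Finset.range m, (1:ℝ) / Nat.factorial j
          ≤ ∑ j ∈ Finset.range m, 2 * (1/2:ℝ) ^ j := by
            apply Finset.sum_le_sum
            intro j _
            have hfj : (0:ℝ) < Nat.factorial j := by positivity
            have h2j : (0:ℝ) < (2:ℝ) ^ j := by positivity
            have hcast : (2:ℝ) ^ j ≤ 2 * Nat.factorial j := by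
              exact_mod_cast two_pow_le_two_mul_fact j
            rw [show (2:ℝ) * (1/2) ^ j = 2 / 2 ^ j by rw [div_pow, one_pow]; ring]
            rw [div_le_div_iff₀ hfj h2j]
            linarith
      _ = 2 * ∑ j ∈ Finset.range m, (1/2:ℝ) ^ j := by rw [Finset.mul_sum]
      _ ≤ 2 * 2 := by
          have := sum_geometric_two_le m
          linarith
      _ = 4 := by norm_num
    calc ∑ k ∈ Finset.Icc 1 m, qWH m k ≤ (2 / m) * ∑ j ∈ Finset.range m, (1:ℝ) / Nat.factorial j := by
          rw [← step2]; exact step1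
    _ ≤ (2 / m) * 4 := by
        apply mul_le_mul_of_nonneg_left step3 (by positivity)
    _ = 8 / m := by ring
    _ ≤ 1 := by
        rw [div_le_one hm0]
        exact_mod_cast h8
  · interval_cases m <;>
      norm_num [Finset.sum_Icc_succ_top, qWH, Nat.factorial]
end

section
/- For m ≥ 10, q(m,1) < Σ_{k=2}^{m} q(m,k), while for 2 ≤ m ≤ 9, q(m,1) > Σ_{k=2}^{m} q(m,k), where q(m,k) = ((2m−k)/(m^(2k+2)·(k−1)!))·(m!/(m−k)!)^2. -/
lemma fac_ratio (m k : ℕ) (h : k ≤ m) :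
    (Nat.factorial m : ℝ) / (Nat.factorial (m - k) : ℝ) = (m.descFactorial k : ℝ) := by
  rw [div_eq_iff (by exact_mod_cast (Nat.factorial_pos _).ne')]
  rw [← Nat.cast_mul, mul_comm, Nat.factorial_mul_descFactorial h]

lemma qWH_nonneg (m k : ℕ) (h : k ≤ m) : 0 ≤ qWH m k := by
  unfold qWH
  have h1 : (0:ℝ) ≤ 2 * (m:ℝ) - k := by
    have : (k:ℝ) ≤ (m:ℝ) := by exact_mod_cast h
    linarith
  have h2 : (0:ℝ) ≤ (m:ℝ) ^ (2*k+2) * (Nat.factorial (k-1) : ℝ) := by positivity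
  exact mul_nonneg (div_nonneg h1 h2) (sq_nonneg _)

lemma big (n : ℕ) : qWH (n+10) 1 < qWH (n+10) 2 + qWH (n+10) 3 + qWH (n+10) 4 := by
  have e1 := fac_ratio (n+10) 1 (by omega)
  have e2 := fac_ratio (n+10) 2 (by omega)
  have e3 := fac_ratio (n+10) 3 (by omega)
  have e4 := fac_ratio (n+10) 4 (by omega)
  unfold qWH
  rw [e1, e2, e3, e4]
  have d1 : (n+10).descFactorial 1 = n+10 := by simp [Nat.descFactorial]
  have d2 : (n+10).descFactorial 2 = (n+9)*(n+10) := by simp [Nat.descFactorial]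
  have d3 : (n+10).descFactorial 3 = (n+8)*((n+9)*(n+10)) := by simp [Nat.descFactorial]
  have d4 : (n+10).descFactorial 4 = (n+7)*((n+8)*((n+9)*(n+10))) := by
    simp [Nat.descFactorial]
  rw [d1, d2, d3, d4]
  set x : ℝ := (n:ℝ) with hx
  have hx0 : (0:ℝ) ≤ x := Nat.cast_nonneg n
  have hxp : (0:ℝ) < x + 10 := by linarith
  push_cast
  norm_num [Nat.factorial]
  rw [← sub_pos]
  have hnum : (0:ℝ) < 8*x^7+457*x^6+10952*x^5+141379*x^4+1044254*x^3+4269148*x^2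
      +8223360*x+3982656 := by
    have h7 := pow_nonneg hx0 7
    have h6 := pow_nonneg hx0 6
    have h5 := pow_nonneg hx0 5
    have h4 := pow_nonneg hx0 4
    have h3 := pow_nonneg hx0 3
    have h2 := pow_nonneg hx0 2
    linarith
  have hpos : (0:ℝ) < (8*x^7+457*x^6+10952*x^5+141379*x^4+1044254*x^3+4269148*x^2
      +8223360*x+3982656)/(6*(x+10)^8) := div_pos hnum (by positivity)
  convert hpos using 1
  field_simp
  ring

theorem qWH_crossover :
    (∀ m : ℕ, 10 ≤ m → qWH m 1 < ∑ k ∈ Finset.Icc 2 m, qWH m k) ∧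
    (∀ m : ℕ, 2 ≤ m → m ≤ 9 → qWH m 1 > ∑ k ∈ Finset.Icc 2 m, qWH m k) := by
  constructor
  · intro m hm
    obtain ⟨n, rfl⟩ : ∃ n, m = n + 10 := ⟨m - 10, by omega⟩
    have hsub : Finset.Icc 2 4 ⊆ Finset.Icc 2 (n+10) :=
      Finset.Icc_subset_Icc_right (by omega)
    have hle : ∑ k ∈ Finset.Icc 2 4, qWH (n+10) k ≤ ∑ k ∈ Finset.Icc 2 (n+10), qWH (n+10) k := by
      apply Finset.sum_le_sum_of_subset_of_nonneg hsub
      intro i hi _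
      exact qWH_nonneg _ _ (Finset.mem_Icc.mp hi).2
    have hsum : ∑ k ∈ Finset.Icc 2 4, qWH (n+10) k
        = qWH (n+10) 2 + qWH (n+10) 3 + qWH (n+10) 4 := by
      rw [show Finset.Icc 2 4 = {2,3,4} from rfl]
      simp [Finset.sum_insert, Finset.mem_insert]
      ring
    calc qWH (n+10) 1 < qWH (n+10) 2 + qWH (n+10) 3 + qWH (n+10) 4 := big n
      _ = ∑ k ∈ Finset.Icc 2 4, qWH (n+10) k := hsum.symm
      _ ≤ _ := hle
  · intro m hm hm9
    interval_cases m <;>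
    · simp only [show (Finset.Icc 2 2 : Finset ℕ) = {2} from rfl,
        show (Finset.Icc 2 3 : Finset ℕ) = {2,3} from rfl,
        show (Finset.Icc 2 4 : Finset ℕ) = {2,3,4} from rfl,
        show (Finset.Icc 2 5 : Finset ℕ) = {2,3,4,5} from rfl,
        show (Finset.Icc 2 6 : Finset ℕ) = {2,3,4,5,6} from rfl,
        show (Finset.Icc 2 7 : Finset ℕ) = {2,3,4,5,6,7} from rfl,
        show (Finset.Icc 2 8 : Finset ℕ) = {2,3,4,5,6,7,8} from rfl,
        show (Finset.Icc 2 9 : Finset ℕ) = {2,3,4,5,6,7,8,9} from rfl]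
      norm_num [qWH, Nat.factorial, Finset.sum_insert, Finset.mem_insert]
end

section
/- Let r = (m−1)/m^n + 1, F = r/m, D1 = (m−1)/m^(n−1) + 1, and E_i = (m−1)/m^(n−i) − (m−1) for i = 2,…,n−1. Then D1 + Σ_{i=0}^{n−3} F^(i+1)·E_{i+2} = m(r−1) + m(r^(n−1) − r) − (r(m−1)/(r−m))·((r/m)^(n−2) − 1) + 1, for all integers n ≥ 3, m ≥ 2. -/
lemma geom_aux (r M : ℝ) (hM : M ≠ 0) (hrM : r - M ≠ 0) (k : ℕ) :
    ∑ i ∈ Finset.range k, (r / M) ^ (i + 1) * (M ^ (i + 2) * (r - 1) - (M - 1))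
      = M * (r ^ (k + 1) - r) - r * (M - 1) / (r - M) * ((r / M) ^ k - 1) := by
  induction k with
  | zero => simp
  | succ k ih =>
      rw [Finset.sum_range_succ, ih]
      rw [div_pow, div_pow]
      field_simp
      ring

theorem diagonal_entry_identity (n m : ℕ) (hn : 3 ≤ n) (hm : 2 ≤ m) :
    (((m : ℝ) - 1) / (m : ℝ) ^ (n - 1) + 1) +
      ∑ i ∈ Finset.range (n - 2),
        ((((m : ℝ) - 1) / (m : ℝ) ^ n + 1) / (m : ℝ)) ^ (i + 1) *
          (((m : ℝ) - 1) / (m : ℝ) ^ (n - (i + 2)) - ((m : ℝ) - 1)) =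
    (m : ℝ) * ((((m : ℝ) - 1) / (m : ℝ) ^ n + 1) - 1) +
      (m : ℝ) * ((((m : ℝ) - 1) / (m : ℝ) ^ n + 1) ^ (n - 1) -
        (((m : ℝ) - 1) / (m : ℝ) ^ n + 1)) -
      ((((m : ℝ) - 1) / (m : ℝ) ^ n + 1) * ((m : ℝ) - 1) /
          ((((m : ℝ) - 1) / (m : ℝ) ^ n + 1) - (m : ℝ))) *
        (((((m : ℝ) - 1) / (m : ℝ) ^ n + 1) / (m : ℝ)) ^ (n - 2) - 1) + 1 := by
  obtain ⟨k, rfl⟩ : ∃ k, n = k + 2 := ⟨n - 2, by omega⟩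
  have hM2 : (2 : ℝ) ≤ (m : ℝ) := by exact_mod_cast hm
  have hM0 : (0 : ℝ) < (m : ℝ) := by linarith
  have hMne : (m : ℝ) ≠ 0 := ne_of_gt hM0
  set M : ℝ := (m : ℝ) with hMdef
  set r : ℝ := (M - 1) / M ^ (k + 2) + 1 with hr
  have hpow : (0 : ℝ) < M ^ (k + 2) := pow_pos hM0 _
  have hle : M ≤ M ^ (k + 2) := le_self_pow₀ (by linarith) (by omega)
  have hrM : r - M ≠ 0 := by
    have h1 : (M - 1) / M ^ (k + 2) < 1 := by
      rw [div_lt_one hpow]; linarith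
    have : r < M := by rw [hr]; linarith
    exact ne_of_lt (by linarith)
  have hr1 : r - 1 = (M - 1) / M ^ (k + 2) := by rw [hr]; ring
  have h2 : k + 2 - 1 = k + 1 := by omega
  have h3 : k + 2 - 2 = k := by omega
  rw [h2, h3]
  have hsum : ∀ i ∈ Finset.range k,
      (r / M) ^ (i + 1) * ((M - 1) / M ^ (k + 2 - (i + 2)) - (M - 1))
        = (r / M) ^ (i + 1) * (M ^ (i + 2) * (r - 1) - (M - 1)) := by
    intro i hi
    have hik : i < k := Finset.mem_range.mp hi
    have e : k + 2 - (i + 2) = k - i := by omega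
    have e2 : M ^ (k + 2) = M ^ (k - i) * M ^ (i + 2) := by
      rw [← pow_add]; congr 1; omega
    rw [e, hr1, e2]
    have : M ^ (k - i) ≠ 0 := pow_ne_zero _ hMne
    field_simp
  rw [Finset.sum_congr rfl hsum, geom_aux r M hMne hrM k]
  have key : (M - 1) / M ^ (k + 1) = M * (r - 1) := by
    rw [hr1]
    field_simp
    ring
  rw [key]
  ring
end
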